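/- Let N ∈ ℕ, let K₁, …, K_{N+1} ∈ ℕ be positive, let b ∈ ℝ^{K₁}, let A_n ∈ ℝ^{K_{n+1} × K_n} for n = 1, …, N, and let ε₁, …, ε_{N+1} > 0 satisfy min{ε_n} > max{‖A_n‖₂ + ‖A_{n+1}‖₂ : n = 1, …, N} (with A_{N+1} := 0). Define L(γ₁, …, γ_{N+1}) = ⟨b, γ₁⟩ + Σ_{n=1}^N ⟨γ_{n+1}, A_n γ_n⟩ + Σ_{n=1}^{N+1} ε_n Σ_k {γ_n}_k log {γ_n}_k on P^{K₁} × ⋯ × P^{K_{N+1}}. Then a point (γ̂₁, …, γ̂_{N+1}) in the product of simplices is the (unique) global minimizer of L if and only if it satisfies the system of softmax equations: γ̂₁ = softmax(−ε₁⁻¹ (b + A₁ᵀ γ̂₂)); γ̂_n = softmax(−ε_n⁻¹ (A_{n−1} γ̂_{n−1} + A_nᵀ γ̂_{n+1})) for n = 2, …, N; and γ̂_{N+1} = softmax(−ε_{N+1}⁻¹ A_N γ̂_N). -/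

import Mathlib

/-- The spectral norm of a real matrix: the operator norm of the induced linear
map between Euclidean spaces. -/
noncomputable def specNorm {α β : Type*} [Fintype α] [Fintype β] [DecidableEq β]
    (A : Matrix α β ℝ) : ℝ :=
  ‖LinearMap.toContinuousLinearMap (Matrix.toEuclideanLin A)‖

/-- The softmax function on `ℝ^K`. -/
noncomputable def softmax {K : ℕ} (x : Fin K → ℝ) : Fin K → ℝ :=
  fun i => Real.exp (x i) / ∑ j, Real.exp (x j)

/-- The `Γ`-subproblem objective of the EON model for a single data instance:
`L(γ₁,…,γ_{N+1}) = ⟨b, γ₁⟩ + ∑_{n=1}^N ⟨γ_{n+1}, A_n γ_n⟩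
  + ∑_{n=1}^{N+1} ε_n ∑_k γ_{n,k} log γ_{n,k}`
(blocks indexed by `Fin (N+1)`, block `n` standing for `γ_{n+1}`; `Real.log 0 = 0`
implements the convention `0 · log 0 = 0`). -/
noncomputable def gammaObj (N : ℕ) (K : Fin (N + 1) → ℕ) (b : Fin (K 0) → ℝ)
    (A : ∀ n : Fin N, Matrix (Fin (K n.succ)) (Fin (K n.castSucc)) ℝ)
    (ε : Fin (N + 1) → ℝ) (γ : ∀ n : Fin (N + 1), Fin (K n) → ℝ) : ℝ :=
  (∑ k, b k * γ 0 k)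
    + (∑ n : Fin N, ∑ j, ∑ k, γ n.succ j * A n j k * γ n.castSucc k)
    + ∑ n : Fin (N + 1), ε n * ∑ k, γ n k * Real.log (γ n k)

/-- The coupling field at block `n`: `b·[n = 1] + A_{n-1} γ_{n-1} + A_nᵀ γ_{n+1}`,
with the boundary terms omitted when absent. Block `n : Fin (N+1)` stands for
layer `γ_{n+1}`, so block `0` receives the input-layer vector `b` and the term
`A₁ᵀ γ₂`, interior blocks receive `A_{n-1} γ_{n-1} + A_nᵀ γ_{n+1}`, and the last
block receives `A_N γ_N`. -/
noncomputable def eonField (N : ℕ) (K : Fin (N + 1) → ℕ) (b : Fin (K 0) → ℝ)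
    (A : ∀ n : Fin N, Matrix (Fin (K n.succ)) (Fin (K n.castSucc)) ℝ)
    (γ : ∀ n : Fin (N + 1), Fin (K n) → ℝ) (n : Fin (N + 1)) (k : Fin (K n)) : ℝ :=
  (if h : n = 0 then b (Fin.cast (congrArg K h) k) else 0)
    + (∑ m : Fin N, if h : m.castSucc = n then
        ∑ j, A m j (Fin.cast (congrArg K h.symm) k) * γ m.succ j else 0)
    + (∑ m : Fin N, if h : m.succ = n then
        ∑ j, A m (Fin.cast (congrArg K h.symm) k) j * γ m.castSucc j else 0)


open Real in
lemma keyA {p q : ℝ} (hp0 : 0 ≤ p) (hp1 : p ≤ 1) (hq0 : 0 < q) (hq1 : q ≤ 1) :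
    (p - q) + (p - q)^2/2 ≤ p * Real.log p - p * Real.log q := by
  rcases eq_or_lt_of_le hp0 with h0 | hp0'
  · simp only [← h0, Real.log_zero, zero_mul, sub_zero, zero_sub]
    nlinarith
  -- p > 0 case
  set g : ℝ → ℝ := fun x => x * Real.log x - x * Real.log q - ((x - q) + (x - q)^2/2) with hg
  have hderiv : ∀ x : ℝ, 0 < x → HasDerivAt g (Real.log x - Real.log q - (x - q)) x := by
    intro x hx
    have h1 : HasDerivAt (fun x : ℝ => x * Real.log x) (Real.log x + 1) x :=
      Real.hasDerivAt_mul_log hx.ne'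
    have h2 : HasDerivAt (fun x : ℝ => x * Real.log q) (Real.log q) x := by
      simpa using (hasDerivAt_id x).mul_const (Real.log q)
    have h3 : HasDerivAt (fun x : ℝ => (x - q) + (x - q)^2/2) (1 + (x - q)) x := by
      have := (((hasDerivAt_id x).sub_const q).pow 2).div_const 2
      have h4 := ((hasDerivAt_id x).sub_const q).add this
      exact h4.congr_deriv (by norm_num)
    have := (h1.sub h2).sub h3
    exact this.congr_deriv (by ring)
  have hgq : g q = 0 := by simp [hg]
  have key : g p ≥ 0 := by
    rcases le_total q p with hle | hle
    · -- monotone on [q, 1] ⊇ [q, p]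
      have hmono : MonotoneOn g (Set.Icc q p) := by
        apply monotoneOn_of_deriv_nonneg (convex_Icc q p)
        · intro x hx
          exact ((hderiv x (lt_of_lt_of_le hq0 hx.1)).continuousAt).continuousWithinAt
        · intro x hx
          rw [interior_Icc] at hx
          exact ((hderiv x (lt_trans hq0 hx.1)).differentiableAt).differentiableWithinAt
        · intro x hx
          rw [interior_Icc] at hx
          rw [(hderiv x (lt_trans hq0 hx.1)).deriv]
          have hxq : q < x := hx.1
          have hx1 : x ≤ 1 := le_trans hx.2.le hp1
          have hlog : Real.log (q / x) ≤ q / x - 1 :=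
            Real.log_le_sub_one_of_pos (div_pos hq0 (lt_trans hq0 hxq))
          rw [Real.log_div hq0.ne' (lt_trans hq0 hxq).ne'] at hlog
          have hxpos : (0:ℝ) < x := lt_trans hq0 hxq
          have : 1 - q / x ≤ Real.log x - Real.log q := by linarith
          have h5 : x - q ≤ 1 - q / x := by
            have hqx : q / x * x = q := div_mul_cancel₀ q hxpos.ne'
            nlinarith [mul_nonneg (sub_nonneg.mpr hxq.le) (sub_nonneg.mpr hx1), hqx]
          linarith
      have := hmono (Set.left_mem_Icc.mpr hle) (Set.right_mem_Icc.mpr hle) hle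
      linarith [hgq ▸ this]
    · -- antitone on [p, q]
      have hmono : AntitoneOn g (Set.Icc p q) := by
        apply antitoneOn_of_deriv_nonpos (convex_Icc p q)
        · intro x hx
          exact ((hderiv x (lt_of_lt_of_le hp0' hx.1)).continuousAt).continuousWithinAt
        · intro x hx
          rw [interior_Icc] at hx
          exact ((hderiv x (lt_trans hp0' hx.1)).differentiableAt).differentiableWithinAt
        · intro x hx
          rw [interior_Icc] at hx
          rw [(hderiv x (lt_trans hp0' hx.1)).deriv]
          have hxpos : (0:ℝ) < x := lt_trans hp0' hx.1
          have hlog : Real.log (x / q) ≤ x / q - 1 :=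
            Real.log_le_sub_one_of_pos (div_pos hxpos hq0)
          rw [Real.log_div hxpos.ne' hq0.ne'] at hlog
          have h5 : x / q - 1 ≤ x - q := by
            rw [div_sub_one hq0.ne', div_le_iff₀ hq0]
            nlinarith [sub_nonneg.mpr hx.2.le]
          linarith
      have := hmono (Set.left_mem_Icc.mpr hle) (Set.right_mem_Icc.mpr hle) hle
      linarith [hgq ▸ this]
  simp only [hg] at key
  linarith


lemma softmax_mem_simplex {K : ℕ} (hK : 0 < K) (x : Fin K → ℝ) :
    softmax x ∈ stdSimplex ℝ (Fin K) := by
  have hZ : (0:ℝ) < ∑ j, Real.exp (x j) :=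
    Finset.sum_pos (fun j _ => Real.exp_pos _) (by simp [Finset.univ_nonempty_iff, Fin.pos_iff_nonempty.mp hK])
  constructor
  · intro i
    exact div_nonneg (Real.exp_pos _).le hZ.le
  · simp only [softmax]
    rw [← Finset.sum_div]
    exact div_self hZ.ne'

lemma softmax_pos {K : ℕ} (hK : 0 < K) (x : Fin K → ℝ) (i : Fin K) : 0 < softmax x i := by
  have hZ : (0:ℝ) < ∑ j, Real.exp (x j) :=
    Finset.sum_pos (fun j _ => Real.exp_pos _) (by simp [Finset.univ_nonempty_iff, Fin.pos_iff_nonempty.mp hK])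
  exact div_pos (Real.exp_pos _) hZ

lemma softmax_le_one {K : ℕ} (hK : 0 < K) (x : Fin K → ℝ) (i : Fin K) : softmax x i ≤ 1 := by
  have hZ : (0:ℝ) < ∑ j, Real.exp (x j) :=
    Finset.sum_pos (fun j _ => Real.exp_pos _) (by simp [Finset.univ_nonempty_iff, Fin.pos_iff_nonempty.mp hK])
  rw [softmax, div_le_one hZ]
  exact Finset.single_le_sum (fun j _ => (Real.exp_pos (x j)).le) (Finset.mem_univ i)

lemma gibbs_identity {Kn : ℕ} (hKn : 0 < Kn) (f : Fin Kn → ℝ) {ε : ℝ} (hε : 0 < ε)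
    (r : Fin Kn → ℝ) (hr : r ∈ stdSimplex ℝ (Fin Kn)) :
    ∑ k, f k * r k + ε * ∑ k, r k * Real.log (r k)
      = ε * ∑ k, (r k * Real.log (r k) - r k * Real.log (softmax (fun k => -ε⁻¹ * f k) k))
        - ε * Real.log (∑ j, Real.exp (-ε⁻¹ * f j)) := by
  set q := softmax (fun k => -ε⁻¹ * f k) with hq
  set Z := ∑ j, Real.exp (-ε⁻¹ * f j) with hZdef
  have hZ : (0:ℝ) < Z :=
    Finset.sum_pos (fun j _ => Real.exp_pos _)
      (by simp [Finset.univ_nonempty_iff, Fin.pos_iff_nonempty.mp hKn])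
  have hlogq : ∀ k, Real.log (q k) = -ε⁻¹ * f k - Real.log Z := by
    intro k
    rw [hq, softmax, Real.log_div (Real.exp_ne_zero _) hZ.ne', Real.log_exp]
  have hfk : ∀ k, f k = -ε * Real.log (q k) - ε * Real.log Z := by
    intro k
    rw [hlogq k]
    field_simp
    ring
  have hsum : ∑ k, f k * r k
      = -ε * ∑ k, r k * Real.log (q k) - ε * Real.log Z := by
    have : ∑ k, f k * r k
        = ∑ k, (-ε * (r k * Real.log (q k)) - ε * Real.log Z * r k) := by
      refine Finset.sum_congr rfl fun k _ => ?_
      rw [hfk k]; ring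
    rw [this, Finset.sum_sub_distrib, ← Finset.mul_sum, ← Finset.mul_sum, hr.2, mul_one]
  rw [hsum, Finset.sum_sub_distrib]
  ring

lemma gibbs {Kn : ℕ} (hKn : 0 < Kn) (f : Fin Kn → ℝ) {ε : ℝ} (hε : 0 < ε)
    (p : Fin Kn → ℝ) (hp : p ∈ stdSimplex ℝ (Fin Kn)) :
    ∑ k, f k * softmax (fun k => -ε⁻¹ * f k) k
        + ε * ∑ k, softmax (fun k => -ε⁻¹ * f k) k * Real.log (softmax (fun k => -ε⁻¹ * f k) k)
        + ε / 2 * ∑ k, (p k - softmax (fun k => -ε⁻¹ * f k) k) ^ 2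
      ≤ ∑ k, f k * p k + ε * ∑ k, p k * Real.log (p k) := by
  set q := softmax (fun k => -ε⁻¹ * f k) with hq
  have hqmem : q ∈ stdSimplex ℝ (Fin Kn) := softmax_mem_simplex hKn _
  have hIq := gibbs_identity hKn f hε q hqmem
  have hIp := gibbs_identity hKn f hε p hp
  rw [← hq] at hIq hIp
  simp only [sub_self, Finset.sum_const_zero, mul_zero, zero_sub] at hIq
  rw [hIp, hIq]
  have key : ∑ k, (p k - q k) ^ 2 / 2
      ≤ ∑ k, (p k * Real.log (p k) - p k * Real.log (q k)) := by
    have h1 : ∀ k, (p k - q k) + (p k - q k)^2/2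
        ≤ p k * Real.log (p k) - p k * Real.log (q k) := by
      intro k
      refine keyA (hp.1 k) ?_ (softmax_pos hKn _ k) (softmax_le_one hKn _ k)
      calc p k ≤ ∑ j, p j := Finset.single_le_sum (fun j _ => hp.1 j) (Finset.mem_univ k)
        _ = 1 := hp.2
    calc ∑ k, (p k - q k) ^ 2 / 2
        = ∑ k, ((p k - q k) + (p k - q k)^2/2) := by
          rw [Finset.sum_add_distrib, Finset.sum_sub_distrib, hp.2, hqmem.2, sub_self, zero_add]
      _ ≤ _ := Finset.sum_le_sum fun k _ => h1 k
  have := mul_le_mul_of_nonneg_left key hε.le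
  have h2 : ∑ k, (p k - q k) ^ 2 / 2 = (∑ k, (p k - q k) ^ 2) / 2 := by
    rw [Finset.sum_div]
  rw [h2] at this
  have h3 : ε * ((∑ k, (p k - q k)^2)/2) = ε/2 * ∑ k, (p k - q k)^2 := by ring
  rw [h3] at this
  linarith

open scoped RealInnerProductSpace

lemma specNorm_nonneg {α β : Type*} [Fintype α] [Fintype β] [DecidableEq β]
    (A : Matrix α β ℝ) : 0 ≤ specNorm A := norm_nonneg _

lemma spec_bound {α β : Type*} [Fintype α] [Fintype β] [DecidableEq β]
    (A : Matrix α β ℝ) (u : α → ℝ) (v : β → ℝ) :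
    |∑ j, ∑ k, u j * A j k * v k|
      ≤ specNorm A * ((∑ j, (u j)^2) + (∑ k, (v k)^2)) / 2 := by
  set L := LinearMap.toContinuousLinearMap (Matrix.toEuclideanLin A) with hL
  set u' : EuclideanSpace ℝ α := (WithLp.equiv 2 (α → ℝ)).symm u with hu'
  set v' : EuclideanSpace ℝ β := (WithLp.equiv 2 (β → ℝ)).symm v with hv'
  have hinner : ⟪u', L v'⟫ = ∑ j, ∑ k, u j * A j k * v k := by
    rw [PiLp.inner_apply]
    refine Finset.sum_congr rfl fun j _ => ?_
    have : (L v') j = ∑ k, A j k * v k := rfl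
    rw [this]
    simp only [RCLike.inner_apply, conj_trivial]
    have : u' j = u j := rfl
    rw [this, Finset.sum_mul]
    exact Finset.sum_congr rfl fun k _ => by ring
  have h1 : |⟪u', L v'⟫| ≤ ‖u'‖ * ‖L v'‖ := abs_real_inner_le_norm _ _
  have h2 : ‖L v'‖ ≤ ‖L‖ * ‖v'‖ := L.le_opNorm v'
  have hu2 : ‖u'‖^2 = ∑ j, (u j)^2 := by
    rw [EuclideanSpace.norm_eq, Real.sq_sqrt (by positivity)]
    exact Finset.sum_congr rfl fun j _ => by rw [Real.norm_eq_abs, sq_abs]; rfl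
  have hv2 : ‖v'‖^2 = ∑ k, (v k)^2 := by
    rw [EuclideanSpace.norm_eq, Real.sq_sqrt (by positivity)]
    exact Finset.sum_congr rfl fun k _ => by rw [Real.norm_eq_abs, sq_abs]; rfl
  have hspec : specNorm A = ‖L‖ := rfl
  rw [← hinner, hspec, ← hu2, ← hv2]
  have hLnn : 0 ≤ ‖L‖ := norm_nonneg _
  nlinarith [norm_nonneg u', norm_nonneg v', norm_nonneg (L v'),
    mul_le_mul_of_nonneg_left h2 (norm_nonneg u'), sq_nonneg (‖u'‖ - ‖v'‖)]

lemma field_sum (N : ℕ) (K : Fin (N + 1) → ℕ) (b : Fin (K 0) → ℝ)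
    (A : ∀ n : Fin N, Matrix (Fin (K n.succ)) (Fin (K n.castSucc)) ℝ)
    (γhat x : ∀ n : Fin (N + 1), Fin (K n) → ℝ) :
    ∑ n : Fin (N + 1), ∑ k, eonField N K b A γhat n k * x n k
      = (∑ k, b k * x 0 k)
        + (∑ m : Fin N, ∑ j, ∑ k, γhat m.succ j * A m j k * x m.castSucc k)
        + (∑ m : Fin N, ∑ j, ∑ k, x m.succ j * A m j k * γhat m.castSucc k) := by
  have expand : ∀ (n : Fin (N+1)) (k : Fin (K n)), eonField N K b A γhat n k * x n k
      = (if h : n = 0 then b (Fin.cast (congrArg K h) k) * x n k else 0)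
        + (∑ m : Fin N, if h : m.castSucc = n then
            (∑ j, A m j (Fin.cast (congrArg K h.symm) k) * γhat m.succ j) * x n k else 0)
        + (∑ m : Fin N, if h : m.succ = n then
            (∑ j, A m (Fin.cast (congrArg K h.symm) k) j * γhat m.castSucc j) * x n k else 0) := by
    intro n k
    rw [eonField, add_mul, add_mul, Finset.sum_mul, Finset.sum_mul]
    congr 1
    · congr 1
      · split <;> simp
      · exact Finset.sum_congr rfl fun m _ => by split <;> simp
    · exact Finset.sum_congr rfl fun m _ => by split <;> simp
  calc ∑ n : Fin (N + 1), ∑ k, eonField N K b A γhat n k * x n k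
      = (∑ n : Fin (N+1), ∑ k, if h : n = 0 then b (Fin.cast (congrArg K h) k) * x n k else 0)
        + (∑ n : Fin (N+1), ∑ k, ∑ m : Fin N, if h : m.castSucc = n then
            (∑ j, A m j (Fin.cast (congrArg K h.symm) k) * γhat m.succ j) * x n k else 0)
        + (∑ n : Fin (N+1), ∑ k, ∑ m : Fin N, if h : m.succ = n then
            (∑ j, A m (Fin.cast (congrArg K h.symm) k) j * γhat m.castSucc j) * x n k else 0) := by
        rw [← Finset.sum_add_distrib, ← Finset.sum_add_distrib]
        refine Finset.sum_congr rfl fun n _ => ?_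
        rw [← Finset.sum_add_distrib, ← Finset.sum_add_distrib]
        exact Finset.sum_congr rfl fun k _ => expand n k
    _ = (∑ k, b k * x 0 k)
        + (∑ m : Fin N, ∑ j, ∑ k, γhat m.succ j * A m j k * x m.castSucc k)
        + (∑ m : Fin N, ∑ j, ∑ k, x m.succ j * A m j k * γhat m.castSucc k) := by
        congr 1
        · congr 1
          · -- first block
            rw [show (∑ n : Fin (N+1), ∑ k, if h : n = 0 then b (Fin.cast (congrArg K h) k) * x n k else 0)
                = ∑ n : Fin (N+1), if h : n = 0 then ∑ k, b (Fin.cast (congrArg K h) k) * x n k else 0 from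
              Finset.sum_congr rfl fun n _ => by split <;> simp]
            rw [Fintype.sum_dite_eq' 0 (fun n h => ∑ k, b (Fin.cast (congrArg K h) k) * x n k)]
            simp
          · -- second block
            calc (∑ n : Fin (N+1), ∑ k, ∑ m : Fin N, if h : m.castSucc = n then
                    (∑ j, A m j (Fin.cast (congrArg K h.symm) k) * γhat m.succ j) * x n k else 0)
                = ∑ n : Fin (N+1), ∑ m : Fin N, ∑ k, (if h : m.castSucc = n then
                    (∑ j, A m j (Fin.cast (congrArg K h.symm) k) * γhat m.succ j) * x n k else 0) :=
                  Finset.sum_congr rfl fun n _ => Finset.sum_comm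
              _ = ∑ m : Fin N, ∑ n : Fin (N+1), ∑ k, (if h : m.castSucc = n then
                    (∑ j, A m j (Fin.cast (congrArg K h.symm) k) * γhat m.succ j) * x n k else 0) :=
                  Finset.sum_comm
              _ = ∑ m : Fin N, ∑ n : Fin (N+1), (if h : m.castSucc = n then
                    ∑ k, (∑ j, A m j (Fin.cast (congrArg K h.symm) k) * γhat m.succ j) * x n k else 0) :=
                  Finset.sum_congr rfl fun m _ => Finset.sum_congr rfl fun n _ => by split <;> simp
              _ = ∑ m : Fin N, ∑ k, (∑ j, A m j k * γhat m.succ j) * x m.castSucc k := by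
                  refine Finset.sum_congr rfl fun m _ => ?_
                  rw [Fintype.sum_dite_eq m.castSucc]
                  simp [Fin.cast_refl]
              _ = ∑ m : Fin N, ∑ j, ∑ k, γhat m.succ j * A m j k * x m.castSucc k := by
                  refine Finset.sum_congr rfl fun m _ => ?_
                  calc ∑ k, (∑ j, A m j k * γhat m.succ j) * x m.castSucc k
                      = ∑ k, ∑ j, A m j k * γhat m.succ j * x m.castSucc k :=
                        Finset.sum_congr rfl fun k _ => Finset.sum_mul _ _ _
                    _ = ∑ j, ∑ k, A m j k * γhat m.succ j * x m.castSucc k := Finset.sum_comm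
                    _ = _ := Finset.sum_congr rfl fun j _ =>
                        Finset.sum_congr rfl fun k _ => by ring
        · -- third block
          calc (∑ n : Fin (N+1), ∑ k, ∑ m : Fin N, if h : m.succ = n then
                  (∑ j, A m (Fin.cast (congrArg K h.symm) k) j * γhat m.castSucc j) * x n k else 0)
              = ∑ n : Fin (N+1), ∑ m : Fin N, ∑ k, (if h : m.succ = n then
                  (∑ j, A m (Fin.cast (congrArg K h.symm) k) j * γhat m.castSucc j) * x n k else 0) :=
                Finset.sum_congr rfl fun n _ => Finset.sum_comm
            _ = ∑ m : Fin N, ∑ n : Fin (N+1), ∑ k, (if h : m.succ = n then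
                  (∑ j, A m (Fin.cast (congrArg K h.symm) k) j * γhat m.castSucc j) * x n k else 0) :=
                Finset.sum_comm
            _ = ∑ m : Fin N, ∑ n : Fin (N+1), (if h : m.succ = n then
                  ∑ k, (∑ j, A m (Fin.cast (congrArg K h.symm) k) j * γhat m.castSucc j) * x n k else 0) :=
                Finset.sum_congr rfl fun m _ => Finset.sum_congr rfl fun n _ => by split <;> simp
            _ = ∑ m : Fin N, ∑ k, (∑ j, A m k j * γhat m.castSucc j) * x m.succ k := by
                refine Finset.sum_congr rfl fun m _ => ?_
                rw [Fintype.sum_dite_eq m.succ]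
                simp [Fin.cast_refl]
            _ = ∑ m : Fin N, ∑ j, ∑ k, x m.succ j * A m j k * γhat m.castSucc k := by
                refine Finset.sum_congr rfl fun m _ => ?_
                calc ∑ k, (∑ j, A m k j * γhat m.castSucc j) * x m.succ k
                    = ∑ k, ∑ j, A m k j * γhat m.castSucc j * x m.succ k :=
                      Finset.sum_congr rfl fun k _ => Finset.sum_mul _ _ _
                  _ = _ := Finset.sum_congr rfl fun k _ =>
                      Finset.sum_congr rfl fun j _ => by ring

lemma master (N : ℕ) (K : Fin (N + 1) → ℕ) (b : Fin (K 0) → ℝ)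
    (A : ∀ n : Fin N, Matrix (Fin (K n.succ)) (Fin (K n.castSucc)) ℝ)
    (ε : Fin (N + 1) → ℝ) (γ γhat : ∀ n : Fin (N + 1), Fin (K n) → ℝ) :
    gammaObj N K b A ε γ
      = gammaObj N K b A ε γhat
        + (∑ n : Fin (N + 1), ∑ k, eonField N K b A γhat n k * (γ n k - γhat n k))
        + (∑ n : Fin (N + 1), ε n * ((∑ k, γ n k * Real.log (γ n k))
            - ∑ k, γhat n k * Real.log (γhat n k)))
        + (∑ m : Fin N, ∑ j, ∑ k, (γ m.succ j - γhat m.succ j) * A m j k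
            * (γ m.castSucc k - γhat m.castSucc k)) := by
  have hfs := field_sum N K b A γhat (fun n k => γ n k - γhat n k)
  rw [gammaObj, gammaObj, hfs]
  have hbil : (∑ m : Fin N, ∑ j, ∑ k, γ m.succ j * A m j k * γ m.castSucc k)
      = (∑ m : Fin N, ∑ j, ∑ k, γhat m.succ j * A m j k * γhat m.castSucc k)
        + (∑ m : Fin N, ∑ j, ∑ k, γhat m.succ j * A m j k * (γ m.castSucc k - γhat m.castSucc k))
        + (∑ m : Fin N, ∑ j, ∑ k, (γ m.succ j - γhat m.succ j) * A m j k * γhat m.castSucc k)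
        + (∑ m : Fin N, ∑ j, ∑ k, (γ m.succ j - γhat m.succ j) * A m j k
            * (γ m.castSucc k - γhat m.castSucc k)) := by
    simp only [← Finset.sum_add_distrib]
    exact Finset.sum_congr rfl fun m _ => Finset.sum_congr rfl fun j _ =>
      Finset.sum_congr rfl fun k _ => by ring
  have hlin : (∑ k, b k * γ 0 k)
      = (∑ k, b k * γhat 0 k) + ∑ k, b k * (γ 0 k - γhat 0 k) := by
    rw [← Finset.sum_add_distrib]
    exact Finset.sum_congr rfl fun k _ => by ring
  have hent : (∑ n : Fin (N + 1), ε n * ∑ k, γ n k * Real.log (γ n k))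
      = (∑ n : Fin (N + 1), ε n * ∑ k, γhat n k * Real.log (γhat n k))
        + ∑ n : Fin (N + 1), ε n * ((∑ k, γ n k * Real.log (γ n k))
            - ∑ k, γhat n k * Real.log (γhat n k)) := by
    rw [← Finset.sum_add_distrib]
    exact Finset.sum_congr rfl fun n _ => by ring
  rw [hbil, hlin, hent]
  ring


lemma coeff_bound (N : ℕ) (w : Fin N → ℝ) (hw : ∀ m, 0 ≤ w m) (ε : Fin (N+1) → ℝ)
    (hε : ∀ n, 0 < ε n)
    (hcond : ∀ i : Fin (N+1), ∀ m : Fin N,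
      w m + (if h : (m:ℕ)+1 < N then w ⟨(m:ℕ)+1, h⟩ else 0) < ε i)
    (g : Fin (N+1) → ℝ) (hg : ∀ n, 0 ≤ g n) :
    (∑ m : Fin N, w m * (g m.succ + g m.castSucc)) ≤ ∑ n : Fin (N+1), ε n * g n := by
  set c1 : Fin (N+1) → ℝ := fun n => ∑ m : Fin N, if m.castSucc = n then w m else 0 with hc1
  set c2 : Fin (N+1) → ℝ := fun n => ∑ m : Fin N, if m.succ = n then w m else 0 with hc2
  have h1 : ∑ m : Fin N, w m * g m.castSucc = ∑ n : Fin (N+1), c1 n * g n := by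
    simp only [hc1]
    simp only [Finset.sum_mul, ite_mul, zero_mul]
    rw [Finset.sum_comm]
    exact Finset.sum_congr rfl fun m _ => (Fintype.sum_ite_eq m.castSucc fun j => w m * g j).symm
  have h2 : ∑ m : Fin N, w m * g m.succ = ∑ n : Fin (N+1), c2 n * g n := by
    simp only [hc2]
    simp only [Finset.sum_mul, ite_mul, zero_mul]
    rw [Finset.sum_comm]
    exact Finset.sum_congr rfl fun m _ => (Fintype.sum_ite_eq m.succ fun j => w m * g j).symm
  have hsplit : ∑ m : Fin N, w m * (g m.succ + g m.castSucc)
      = (∑ m : Fin N, w m * g m.castSucc) + ∑ m : Fin N, w m * g m.succ := by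
    rw [← Finset.sum_add_distrib]
    exact Finset.sum_congr rfl fun m _ => by ring
  rw [hsplit, h1, h2, ← Finset.sum_add_distrib]
  refine Finset.sum_le_sum fun n _ => ?_
  have key : c1 n + c2 n ≤ ε n := by
    have hc1val : c1 n = if hn : (n:ℕ) < N then w ⟨(n:ℕ), hn⟩ else 0 := by
      simp only [hc1]
      split
      · rename_i hn
        rw [Finset.sum_eq_single_of_mem ⟨(n:ℕ), hn⟩ (Finset.mem_univ _)]
        · rw [if_pos (by ext; simp)]
        · intro m _ hne
          rw [if_neg]
          intro hc
          exact hne (by ext; simpa [Fin.ext_iff] using congrArg Fin.val hc)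
      · rename_i hn
        refine Finset.sum_eq_zero fun m _ => if_neg fun hc => hn ?_
        have := congrArg Fin.val hc
        simp at this
        exact this ▸ m.isLt
    have hc2val : c2 n = if hn : 0 < (n:ℕ) then
        w ⟨(n:ℕ) - 1, by have := n.isLt; omega⟩ else 0 := by
      simp only [hc2]
      split
      · rename_i hn
        rw [Finset.sum_eq_single_of_mem ⟨(n:ℕ) - 1, by have := n.isLt; omega⟩
            (Finset.mem_univ _)]
        · rw [if_pos (by ext; simp [Fin.val_succ]; omega)]
        · intro m _ hne
          rw [if_neg]
          intro hc
          apply hne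
          have := congrArg Fin.val hc
          simp [Fin.val_succ] at this
          ext
          simp
          omega
      · rename_i hn
        refine Finset.sum_eq_zero fun m _ => if_neg fun hc => hn ?_
        have := congrArg Fin.val hc
        simp [Fin.val_succ] at this
        omega
    rw [hc1val, hc2val]
    by_cases hn : (n:ℕ) < N
    · by_cases h0 : 0 < (n:ℕ)
      · rw [dif_pos hn, dif_pos h0]
        set m0 : Fin N := ⟨(n:ℕ) - 1, by have := n.isLt; omega⟩ with hm0def
        have hm0 : (m0:ℕ) + 1 < N := by simp [hm0def]; omega
        have hcnd := hcond n m0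
        rw [dif_pos hm0] at hcnd
        have heq : (⟨(m0:ℕ)+1, hm0⟩ : Fin N) = ⟨(n:ℕ), hn⟩ := by
          ext; simp [hm0def]; omega
        rw [heq] at hcnd
        linarith
      · rw [dif_pos hn, dif_neg h0]
        have hcnd := hcond n ⟨(n:ℕ), hn⟩
        have hnn : (0:ℝ) ≤ if h : ((⟨(n:ℕ), hn⟩ : Fin N):ℕ)+1 < N then
            w ⟨((⟨(n:ℕ), hn⟩ : Fin N):ℕ)+1, h⟩ else 0 := by
          split
          · exact hw _
          · exact le_refl 0
        linarith
    · by_cases h0 : 0 < (n:ℕ)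
      · rw [dif_neg hn, dif_pos h0]
        set m0 : Fin N := ⟨(n:ℕ) - 1, by have := n.isLt; omega⟩ with hm0def
        have hcnd := hcond n m0
        have hnn : (0:ℝ) ≤ if h : (m0:ℕ)+1 < N then w ⟨(m0:ℕ)+1, h⟩ else 0 := by
          split
          · exact hw _
          · exact le_refl 0
        linarith
      · rw [dif_neg hn, dif_neg h0]
        have := (hε n).le
        linarith
  calc c1 n * g n + c2 n * g n = (c1 n + c2 n) * g n := by ring
    _ ≤ ε n * g n := mul_le_mul_of_nonneg_right key (hg n)

/-- **Equivalence of the `Γ`-problem with the system of softmax equations.**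
Under the regularization condition `min_n ε_n > max_n (‖A_n‖₂ + ‖A_{n+1}‖₂)`
(with `A_{N+1} := 0`), a feasible point `γ̂` is the (unique) global minimizer of
the `Γ`-objective over the product of probability simplices if and only if it
satisfies `γ̂_n = softmax(−ε_n⁻¹ (b·[n=1] + A_{n-1} γ̂_{n-1} + A_nᵀ γ̂_{n+1}))`
for every block `n`. -/
theorem gamma_problem_iff_softmax_system
    (N : ℕ) (K : Fin (N + 1) → ℕ) (hK : ∀ n, 0 < K n)
    (b : Fin (K 0) → ℝ)
    (A : ∀ n : Fin N, Matrix (Fin (K n.succ)) (Fin (K n.castSucc)) ℝ)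
    (ε : Fin (N + 1) → ℝ) (hε : ∀ n, 0 < ε n)
    (hcond : ∀ i : Fin (N + 1), ∀ n : Fin N,
      specNorm (A n) + (if h : (n : ℕ) + 1 < N then specNorm (A ⟨(n : ℕ) + 1, h⟩) else 0)
        < ε i)
    (γhat : ∀ n : Fin (N + 1), Fin (K n) → ℝ)
    (hfeas : ∀ n, γhat n ∈ stdSimplex ℝ (Fin (K n))) :
    (∀ γ : ∀ n : Fin (N + 1), Fin (K n) → ℝ,
        (∀ n, γ n ∈ stdSimplex ℝ (Fin (K n))) →
        gammaObj N K b A ε γhat ≤ gammaObj N K b A ε γ)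
      ↔ ∀ n : Fin (N + 1),
          γhat n = softmax (fun k => -(ε n)⁻¹ * eonField N K b A γhat n k) := by
  constructor
  · -- minimizer ⇒ softmax system
    intro hmin n
    set q : Fin (K n) → ℝ :=
      softmax (fun k => -(ε n)⁻¹ * eonField N K b A γhat n k) with hqdef
    set γ' := Function.update γhat n q with hγ'
    have hfeas' : ∀ n', γ' n' ∈ stdSimplex ℝ (Fin (K n')) := by
      intro n'
      by_cases h : n' = n
      · subst h
        rw [hγ', Function.update_self]
        exact softmax_mem_simplex (hK n') _
      · rw [hγ', Function.update_of_ne h]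
        exact hfeas n'
    have hle := hmin γ' hfeas'
    have hmas := master N K b A ε γ' γhat
    have hT2 : (∑ n' : Fin (N+1), ∑ k, eonField N K b A γhat n' k * (γ' n' k - γhat n' k))
        = ∑ k, eonField N K b A γhat n k * (q k - γhat n k) := by
      rw [Finset.sum_eq_single_of_mem n (Finset.mem_univ _)]
      · simp only [hγ', Function.update_self]
      · intro n' _ hne
        refine Finset.sum_eq_zero fun k _ => ?_
        rw [hγ', Function.update_of_ne hne, sub_self, mul_zero]
    have hT3 : (∑ n' : Fin (N+1), ε n' * ((∑ k, γ' n' k * Real.log (γ' n' k))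
          - ∑ k, γhat n' k * Real.log (γhat n' k)))
        = ε n * ((∑ k, q k * Real.log (q k)) - ∑ k, γhat n k * Real.log (γhat n k)) := by
      rw [Finset.sum_eq_single_of_mem n (Finset.mem_univ _)]
      · simp only [hγ', Function.update_self]
      · intro n' _ hne
        rw [hγ', Function.update_of_ne hne, sub_self, mul_zero]
    have hT4 : (∑ m : Fin N, ∑ j, ∑ k, (γ' m.succ j - γhat m.succ j) * A m j k
          * (γ' m.castSucc k - γhat m.castSucc k)) = 0 := by
      refine Finset.sum_eq_zero fun m _ => ?_
      by_cases h : m.succ = n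
      · have h2 : m.castSucc ≠ n := by
          rw [← h]
          exact (Fin.castSucc_lt_succ (i := m)).ne
        refine Finset.sum_eq_zero fun j _ => Finset.sum_eq_zero fun k _ => ?_
        rw [hγ', Function.update_of_ne h2, sub_self, mul_zero]
      · refine Finset.sum_eq_zero fun j _ => Finset.sum_eq_zero fun k _ => ?_
        rw [hγ', Function.update_of_ne h, sub_self, zero_mul, zero_mul]
    rw [hT2, hT3, hT4, add_zero] at hmas
    have hgibbs := gibbs (hK n) (eonField N K b A γhat n) (hε n) (γhat n) (hfeas n)
    rw [← hqdef] at hgibbs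
    have hsplit : (∑ k, eonField N K b A γhat n k * (q k - γhat n k))
        = (∑ k, eonField N K b A γhat n k * q k)
          - ∑ k, eonField N K b A γhat n k * γhat n k := by
      rw [← Finset.sum_sub_distrib]
      exact Finset.sum_congr rfl fun k _ => by ring
    rw [hsplit, mul_sub] at hmas
    have hSnn : (0:ℝ) ≤ ∑ k, (γhat n k - q k)^2 :=
      Finset.sum_nonneg fun k _ => sq_nonneg _
    have hS0 : ∑ k, (γhat n k - q k)^2 = 0 := by
      have hεn := hε n
      nlinarith [hle, hmas, hgibbs]
    funext k
    have hk := (Finset.sum_eq_zero_iff_of_nonneg (fun k _ => sq_nonneg _)).mp hS0 k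
      (Finset.mem_univ k)
    have := pow_eq_zero_iff (n := 2) (by norm_num) |>.mp hk
    linarith [this]
  · -- softmax system ⇒ minimizer
    intro hsm γ hγ
    have hmas := master N K b A ε γ γhat
    have hg : ∀ n : Fin (N+1), ε n / 2 * (∑ k, (γ n k - γhat n k)^2)
        ≤ (∑ k, eonField N K b A γhat n k * (γ n k - γhat n k))
          + ε n * ((∑ k, γ n k * Real.log (γ n k))
              - ∑ k, γhat n k * Real.log (γhat n k)) := by
      intro n
      have h := gibbs (hK n) (eonField N K b A γhat n) (hε n) (γ n) (hγ n)
      rw [← hsm n] at h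
      have hsplit : (∑ k, eonField N K b A γhat n k * (γ n k - γhat n k))
          = (∑ k, eonField N K b A γhat n k * γ n k)
            - ∑ k, eonField N K b A γhat n k * γhat n k := by
        rw [← Finset.sum_sub_distrib]
        exact Finset.sum_congr rfl fun k _ => by ring
      rw [hsplit, mul_sub]
      linarith
    have hsum2 : ∑ n : Fin (N+1), ε n / 2 * (∑ k, (γ n k - γhat n k)^2)
        ≤ (∑ n : Fin (N+1), ∑ k, eonField N K b A γhat n k * (γ n k - γhat n k))
          + ∑ n : Fin (N+1), ε n * ((∑ k, γ n k * Real.log (γ n k))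
              - ∑ k, γhat n k * Real.log (γhat n k)) := by
      rw [← Finset.sum_add_distrib]
      exact Finset.sum_le_sum fun n _ => hg n
    have hquad : ∀ m : Fin N,
        -(specNorm (A m) * ((∑ j, (γ m.succ j - γhat m.succ j)^2)
            + (∑ k, (γ m.castSucc k - γhat m.castSucc k)^2)) / 2)
          ≤ ∑ j, ∑ k, (γ m.succ j - γhat m.succ j) * A m j k
              * (γ m.castSucc k - γhat m.castSucc k) := by
      intro m
      have h := spec_bound (A m) (fun j => γ m.succ j - γhat m.succ j)
        (fun k => γ m.castSucc k - γhat m.castSucc k)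
      exact (abs_le.mp h).1
    have hquadsum : -(∑ m : Fin N, specNorm (A m) * ((∑ j, (γ m.succ j - γhat m.succ j)^2)
            + (∑ k, (γ m.castSucc k - γhat m.castSucc k)^2)) / 2)
        ≤ ∑ m : Fin N, ∑ j, ∑ k, (γ m.succ j - γhat m.succ j) * A m j k
            * (γ m.castSucc k - γhat m.castSucc k) := by
      rw [← Finset.sum_neg_distrib]
      exact Finset.sum_le_sum fun m _ => hquad m
    have hcb := coeff_bound N (fun m => specNorm (A m)) (fun m => specNorm_nonneg _) ε hε
      hcond (fun n => ∑ k, (γ n k - γhat n k)^2)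
      (fun n => Finset.sum_nonneg fun k _ => sq_nonneg _)
    have e1 : ∑ n : Fin (N+1), ε n / 2 * (∑ k, (γ n k - γhat n k)^2)
        = (∑ n : Fin (N+1), ε n * ∑ k, (γ n k - γhat n k)^2) / 2 := by
      rw [Finset.sum_div]
      exact Finset.sum_congr rfl fun n _ => by ring
    have e2 : ∑ m : Fin N, specNorm (A m) * ((∑ j, (γ m.succ j - γhat m.succ j)^2)
          + (∑ k, (γ m.castSucc k - γhat m.castSucc k)^2)) / 2
        = (∑ m : Fin N, specNorm (A m) * ((∑ j, (γ m.succ j - γhat m.succ j)^2)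
          + (∑ k, (γ m.castSucc k - γhat m.castSucc k)^2))) / 2 := by
      rw [Finset.sum_div]
    rw [e1] at hsum2
    rw [e2] at hquadsum
    linarith [hmas, hsum2, hquadsum, hcb]
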